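/- arXiv:1508.03688 — 3 statements merged into one kernel-verified Lean document; each statement's English description precedes it below -/
import Mathlib

section
/- Let D = {D_a}_{a ∈ A} be a cover of a small category C, and suppose the index set A is equipped with two total orders ≤₁ and ≤₂. Let Č^o(D)_1 and Č^o(D)_2 denote the ordered Čech nerves formed with respect to ≤₁ and ≤₂ respectively. Then the Grothendieck constructions Gr(Č^o(D)_1) and Gr(Č^o(D)_2) are isomorphic as categories. -/
open CategoryTheory

namespace CechCover

/-- A subcategory of a small category `C`: a set of objects together with, for each
pair of objects of `C`, a set of morphisms, closed under identities (of objects of the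
subcategory) and under composition, all morphisms lying between objects of the
subcategory. -/
structure Subcat (C : Type) [SmallCategory C] where
  objs : Set C
  homs : ∀ x y : C, Set (x ⟶ y)
  homs_subset : ∀ (x y : C), (homs x y).Nonempty → x ∈ objs ∧ y ∈ objs
  id_mem : ∀ x ∈ objs, 𝟙 x ∈ homs x x
  comp_mem : ∀ {x y z : C} (f : x ⟶ y) (g : y ⟶ z),
    f ∈ homs x y → g ∈ homs y z → f ≫ g ∈ homs x z

variable {C : Type} [SmallCategory C] {A : Type}

/-- The morphisms of the union `⋃ a, D a` of a family of subcategories: those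
generated under composition by the morphisms of the `D a`. -/
inductive GenHom (D : A → Subcat C) : ∀ {x y : C}, (x ⟶ y) → Prop
  | of {x y : C} (a : A) (f : x ⟶ y) (hf : f ∈ (D a).homs x y) : GenHom D f
  | comp {x y z : C} (f : x ⟶ y) (g : y ⟶ z) :
      GenHom D f → GenHom D g → GenHom D (f ≫ g)

/-- `D` is a cover of `C`: the union of the subcategories `D a` is all of `C`. -/
def IsCover (D : A → Subcat C) : Prop :=
  (∀ x : C, ∃ a, x ∈ (D a).objs) ∧ ∀ {x y : C} (f : x ⟶ y), GenHom D f

/-- An ideal of `C`: a full subcategory such that an object `y` belongs to it whenever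
`C(y, x)` is nonempty for some object `x` of it. -/
def Subcat.IsIdeal (Dv : Subcat C) : Prop :=
  (∀ x y : C, x ∈ Dv.objs → y ∈ Dv.objs → Dv.homs x y = Set.univ) ∧
  ∀ x y : C, x ∈ Dv.objs → Nonempty (y ⟶ x) → y ∈ Dv.objs

/-- A filter of `C`: a full subcategory such that an object `y` belongs to it whenever
`C(x, y)` is nonempty for some object `x` of it. -/
def Subcat.IsFilter (Dv : Subcat C) : Prop :=
  (∀ x y : C, x ∈ Dv.objs → y ∈ Dv.objs → Dv.homs x y = Set.univ) ∧
  ∀ x y : C, x ∈ Dv.objs → Nonempty (x ⟶ y) → y ∈ Dv.objs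

/-- Objects of the Grothendieck construction `Gr(Č(D))` of the Čech nerve of a cover
`D`: tuples `x_{a₀…aₙ}` where `x` belongs to the intersection `D_{a₀} ∩ ⋯ ∩ D_{aₙ}`. -/
structure GrCechObj (D : A → Subcat C) where
  n : ℕ
  idx : Fin (n + 1) → A
  pt : C
  mem : ∀ i, pt ∈ (D (idx i)).objs

/-- Morphisms `x_{a₀…aₙ} ⟶ y_{b₀…bₘ}` of `Gr(Č(D))`: pairs `(φ, f)` of an
order-preserving map `φ : [m] → [n]` with `b_j = a_{φ(j)}` for all `j`, and a morphism
`f : x ⟶ y` of the intersection `D_{b₀…bₘ}`. -/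
structure GrCechHom (D : A → Subcat C) (X Y : GrCechObj D) where
  φ : Fin (Y.n + 1) →o Fin (X.n + 1)
  idx_eq : ∀ j, Y.idx j = X.idx (φ j)
  f : X.pt ⟶ Y.pt
  mem : ∀ j, f ∈ (D (Y.idx j)).homs X.pt Y.pt

theorem GrCechHom.ext' {D : A → Subcat C} {X Y : GrCechObj D}
    {F G : GrCechHom D X Y} (h1 : F.φ = G.φ) (h2 : F.f = G.f) : F = G := by
  cases F; cases G; cases h1; cases h2; rfl

/-- The Grothendieck construction `Gr(Č(D))` of the Čech nerve, as a category. -/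
instance GrCech.category (D : A → Subcat C) : Category (GrCechObj D) where
  Hom X Y := GrCechHom D X Y
  id X :=
    { φ := OrderHom.id
      idx_eq := fun _ => rfl
      f := 𝟙 X.pt
      mem := fun j => (D (X.idx j)).id_mem _ (X.mem j) }
  comp {X Y Z} F G :=
    { φ := F.φ.comp G.φ
      idx_eq := fun j => (G.idx_eq j).trans (F.idx_eq (G.φ j))
      f := F.f ≫ G.f
      mem := fun j => (D (Z.idx j)).comp_mem F.f G.f
        (by rw [G.idx_eq j]; exact F.mem (G.φ j)) (G.mem j) }
  id_comp F := GrCechHom.ext' rfl (Category.id_comp _)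
  comp_id F := GrCechHom.ext' rfl (Category.comp_id _)
  assoc F G H := GrCechHom.ext' rfl (Category.assoc _ _ _)

/-- The natural functor `ρ : Gr(Č(D)) ⥤ C` forgetting indices. -/
def grProj (D : A → Subcat C) : GrCechObj D ⥤ C where
  obj X := X.pt
  map F := F.f
  map_id _ := rfl
  map_comp _ _ := rfl

/-- The Grothendieck construction `Gr(Č^o(D))` of the ordered Čech nerve, with respect
to a total order `le` on the index set: the full subcategory of `Gr(Č(D))` on the
objects with nondecreasing index tuple. -/
abbrev GrCechOrd (D : A → Subcat C) (le : A → A → Prop) : Type :=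
  ObjectProperty.FullSubcategory (fun X : GrCechObj D => ∀ i j : Fin (X.n + 1), i ≤ j → le (X.idx i) (X.idx j))

/-- The inclusion functor `I : Gr(Č^o(D)) ⥤ Gr(Č(D))`. -/
def ordIncl (D : A → Subcat C) (le : A → A → Prop) : GrCechOrd D le ⥤ GrCechObj D :=
  ObjectProperty.ι _

end CechCover

/-! Sorting an index tuple stably with respect to `r₂` turns an `r₁`-sorted tuple into an
`r₂`-sorted one. Conjugating by the sorting permutations keeps index maps order-preserving,
because a stable sort orders positions by the lexicographic key `(a i, i)`, and a monotone `φ`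
with `b = a ∘ φ` carries the keys of `b` monotonically to those of `a`. Sorting back with
respect to `r₁` inverts the permutation exactly: the tuple was `r₁`-sorted, and stability
keeps tied entries in their original order. Morphisms of `C` are never touched, so the two
functors are strictly inverse. -/

namespace Tuple

variable {α : Type*} [LinearOrder α] {n : ℕ}

-- `(sort f).symm i` is the rank of `(f i, i)` in the lexicographic order.
theorem sort_symm_le_sort_symm_iff (f : Fin n → α) (i j : Fin n) :
    (sort f).symm i ≤ (sort f).symm j ↔ toLex (f i, i) ≤ toLex (f j, j) :=
  (graphEquiv₂ f).symm.le_iff_le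

theorem sort_symm_lt_sort_symm_of_eq {f : Fin n → α} {i j : Fin n} (hij : i < j)
    (h : f i = f j) : (sort f).symm i < (sort f).symm j :=
  (graphEquiv₂ f).symm.lt_iff_lt.mpr (Prod.Lex.toLex_lt_toLex.mpr (.inr ⟨h, hij⟩))

theorem sort_comp_eq_symm {f : Fin n → α} (hf : Monotone f) {σ : Equiv.Perm (Fin n)}
    (hσ : ∀ i j, i < j → f i = f j → σ.symm i < σ.symm j) : sort (f ∘ σ) = σ.symm :=
  (eq_sort_iff.mpr ⟨by simpa [Function.comp_def] using hf,
    fun i j hij h => by simpa using hσ i j hij (by simpa using h)⟩).symm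

theorem monotone_sort_symm_comp_comp {m : ℕ} {a : Fin n → α} {b : Fin m → α}
    (φ : Fin m →o Fin n) (hb : ∀ j, b j = a (φ j)) :
    Monotone ((sort a).symm ∘ φ ∘ sort b) := by
  intro i j hij
  set p := sort b i
  set q := sort b j
  have hpq : toLex (b p, p) ≤ toLex (b q, q) :=
    (sort_symm_le_sort_symm_iff b p q).mp (by simpa [p, q] using hij)
  simp only [Function.comp_apply, sort_symm_le_sort_symm_iff, ← hb]
  rcases Prod.Lex.toLex_le_toLex.mp hpq with hlt | ⟨heq, hle⟩
  · exact Prod.Lex.toLex_le_toLex.mpr (.inl hlt)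
  · exact Prod.Lex.toLex_le_toLex.mpr (.inr ⟨heq, φ.monotone hle⟩)

end Tuple

noncomputable abbrev IsLinearOrder.toLinearOrder {A : Type*} {r : A → A → Prop}
    (h : IsLinearOrder A r) : LinearOrder A :=
  haveI := h
  { le := r
    le_refl := refl_of r
    le_trans := fun _ _ _ => trans_of r
    le_antisymm := fun _ _ => antisymm_of r
    le_total := total_of r
    toDecidableLE := Classical.decRel r }

namespace CechCover

variable {C : Type} [SmallCategory C] {A : Type} {D : A → Subcat C}

def GrCechObj.permute (X : GrCechObj D) (σ : Equiv.Perm (Fin (X.n + 1))) : GrCechObj D :=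
  ⟨X.n, X.idx ∘ σ, X.pt, fun i => X.mem (σ i)⟩

def GrCechHom.permute {X Y : GrCechObj D} (F : GrCechHom D X Y) (σ : Equiv.Perm (Fin (X.n + 1)))
    (τ : Equiv.Perm (Fin (Y.n + 1))) (hmono : Monotone (σ.symm ∘ F.φ ∘ τ)) :
    GrCechHom D (X.permute σ) (Y.permute τ) where
  φ := ⟨σ.symm ∘ F.φ ∘ τ, hmono⟩
  idx_eq j := (F.idx_eq (τ j)).trans (congrArg X.idx (σ.apply_symm_apply _).symm)
  f := F.f
  mem j := F.mem (τ j)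

variable (P Q R : ObjectProperty (GrCechObj D))

def permuteFunctor (σ : ∀ X : P.FullSubcategory, Equiv.Perm (Fin (X.obj.n + 1)))
    (hQ : ∀ X : P.FullSubcategory, Q (X.obj.permute (σ X)))
    (hmono : ∀ (X Y : P.FullSubcategory) (F : X ⟶ Y),
      Monotone ((σ X).symm ∘ F.hom.φ ∘ σ Y)) :
    P.FullSubcategory ⥤ Q.FullSubcategory where
  obj X := ⟨X.obj.permute (σ X), hQ X⟩
  map F := ObjectProperty.homMk (F.hom.permute _ _ (hmono _ _ F))
  map_id X := InducedCategory.hom_ext <| GrCechHom.ext'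
    (OrderHom.ext _ _ (funext fun j => (σ X).symm_apply_apply j)) rfl
  map_comp {X Y _} F _ := InducedCategory.hom_ext <| GrCechHom.ext'
    (OrderHom.ext _ _ (funext fun _ =>
      congrArg (σ X).symm (congrArg F.hom.φ ((σ Y).apply_symm_apply _)).symm)) rfl

theorem permuteFunctor_comp (σ : ∀ X : P.FullSubcategory, Equiv.Perm (Fin (X.obj.n + 1)))
    (hQ : ∀ X : P.FullSubcategory, Q (X.obj.permute (σ X)))
    (hmono : ∀ (X Y : P.FullSubcategory) (F : X ⟶ Y),
      Monotone ((σ X).symm ∘ F.hom.φ ∘ σ Y))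
    (τ : ∀ X : Q.FullSubcategory, Equiv.Perm (Fin (X.obj.n + 1)))
    (hR : ∀ X : Q.FullSubcategory, R (X.obj.permute (τ X)))
    (hmono' : ∀ (X Y : Q.FullSubcategory) (F : X ⟶ Y),
      Monotone ((τ X).symm ∘ F.hom.φ ∘ τ Y)) :
    permuteFunctor P Q σ hQ hmono ⋙ permuteFunctor Q R τ hR hmono' =
      permuteFunctor P R (fun X => (τ ((permuteFunctor P Q σ hQ hmono).obj X)).trans (σ X))
        (fun X => hR ((permuteFunctor P Q σ hQ hmono).obj X))
        (fun _ _ F => hmono' _ _ ((permuteFunctor P Q σ hQ hmono).map F)) :=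
  rfl

theorem permuteFunctor_eq_id (σ : ∀ X : P.FullSubcategory, Equiv.Perm (Fin (X.obj.n + 1)))
    (hP : ∀ X : P.FullSubcategory, P (X.obj.permute (σ X)))
    (hmono : ∀ (X Y : P.FullSubcategory) (F : X ⟶ Y),
      Monotone ((σ X).symm ∘ F.hom.φ ∘ σ Y))
    (hσ : ∀ X, σ X = 1) :
    permuteFunctor P P σ hP hmono = 𝟭 _ := by
  obtain rfl : σ = fun _ => 1 := funext hσ
  rfl

noncomputable def sortFunctor (P : ObjectProperty (GrCechObj D)) (L : LinearOrder A) :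
    P.FullSubcategory ⥤ GrCechOrd D L.le :=
  letI := L
  permuteFunctor P _ (fun X => Tuple.sort X.obj.idx) (fun X => Tuple.monotone_sort X.obj.idx)
    (fun _ _ F => Tuple.monotone_sort_symm_comp_comp F.hom.φ F.hom.idx_eq)

theorem sortFunctor_comp_sortFunctor (L₁ L₂ : LinearOrder A) :
    sortFunctor _ L₂ ⋙ sortFunctor _ L₁ = 𝟭 (GrCechOrd D L₁.le) := by
  refine (permuteFunctor_comp _ _ _ _ _ _ _ _ _).trans
    (permuteFunctor_eq_id _ _ _ _ fun X => ?_)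
  have resort := @Tuple.sort_comp_eq_symm _ L₁ _ _ X.property _
    fun _ _ hij h => @Tuple.sort_symm_lt_sort_symm_of_eq _ L₂ _ _ _ _ hij h
  exact (congrArg (Equiv.trans · _) resort).trans (Equiv.symm_trans_self _)

end CechCover

open CechCover

theorem ordered_cech_nerve_independent_of_order_general
    {C : Type} [SmallCategory C] {A : Type} (D : A → Subcat C)
    (r₁ r₂ : A → A → Prop) (hr₁ : IsLinearOrder A r₁) (hr₂ : IsLinearOrder A r₂) :
    ∃ (F : GrCechOrd D r₁ ⥤ GrCechOrd D r₂) (G : GrCechOrd D r₂ ⥤ GrCechOrd D r₁),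
      F ⋙ G = 𝟭 (GrCechOrd D r₁) ∧ G ⋙ F = 𝟭 (GrCechOrd D r₂) :=
  ⟨sortFunctor _ hr₂.toLinearOrder, sortFunctor _ hr₁.toLinearOrder,
    sortFunctor_comp_sortFunctor hr₁.toLinearOrder hr₂.toLinearOrder,
    sortFunctor_comp_sortFunctor hr₂.toLinearOrder hr₁.toLinearOrder⟩

/-- For a cover `D` of a small category `C` whose index set carries two total orders
`r₁` and `r₂`, the Grothendieck constructions of the two associated ordered Čech
nerves are isomorphic as categories. -/
theorem ordered_cech_nerve_independent_of_order
    {C : Type} [SmallCategory C] {A : Type} (D : A → Subcat C) (hcover : IsCover D)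
    (r₁ r₂ : A → A → Prop) (hr₁ : IsLinearOrder A r₁) (hr₂ : IsLinearOrder A r₂) :
    ∃ (F : GrCechOrd D r₁ ⥤ GrCechOrd D r₂) (G : GrCechOrd D r₂ ⥤ GrCechOrd D r₁),
      F ⋙ G = 𝟭 (GrCechOrd D r₁) ∧ G ⋙ F = 𝟭 (GrCechOrd D r₂) :=
  ordered_cech_nerve_independent_of_order_general D r₁ r₂ hr₁ hr₂
end

section
/- Let D = {D_a}_{a ∈ A} be a locally finite cover of a small category C, indexed by a totally ordered set A, such that every D_a is an ideal of C. Then the natural functor ρ̃ : Gr(Č^o(D̃)) → C from the Grothendieck construction of the reduced Čech nerve has a left adjoint, namely the functor π : C → Gr(Č^o(D̃)) sending an object x to x_{a_0…a_n}, where a_0 < … < a_n are exactly the indices a ∈ A with x ∈ ob(D_a). -/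
open CategoryTheory

namespace CechCover

variable {C : Type} [SmallCategory C] {A : Type}

/-- A cover is locally finite if every object belongs to only finitely many of the
subcategories. -/
def IsLocallyFinite (D : A → Subcat C) : Prop :=
  ∀ x : C, {a : A | x ∈ (D a).objs}.Finite

/-- The Grothendieck construction `Gr(Č^o(D̃))` of the reduced Čech nerve, with respect
to a total order on the index set with strict order `lt`: the full subcategory of
`Gr(Č(D))` on the objects with strictly increasing index tuple.  (Between two objects
with pairwise distinct indices, the index maps `φ` of morphisms of `Gr(Č(D))` are
automatically injective, so this agrees with the Grothendieck construction over
`Δ_inj`.) -/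
abbrev GrCechRed (D : A → Subcat C) (lt : A → A → Prop) : Type :=
  ObjectProperty.FullSubcategory (fun X : GrCechObj D => ∀ i j : Fin (X.n + 1), i < j → lt (X.idx i) (X.idx j))

/-- The inclusion functor `Gr(Č^o(D̃)) ⥤ Gr(Č(D))`. -/
def redIncl (D : A → Subcat C) (lt : A → A → Prop) : GrCechRed D lt ⥤ GrCechObj D :=
  ObjectProperty.ι _

end CechCover

open CechCover

/-!
Since every `D a` is a full ideal, a morphism `f : x ⟶ y` puts `x` into every `D a`
containing `y`, and then `f` lies in `D a`. So if `x_{a₀…aₙ}` lists *all* the indices of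
`x`, every index of an object `y_{b₀…bₘ}` of the reduced nerve is some `aᵢ`, and `f` lifts
to `x_{a₀…aₙ} ⟶ y_{b₀…bₘ}`; as both index tuples are strictly increasing, the index map
of the lift is forced. Hence morphisms `π x ⟶ Y` are exactly morphisms `x ⟶ ρ̃ Y`.
Local finiteness and the cover property make the set of indices of `x` finite and
nonempty, so that it can be listed as `a₀ < ⋯ < aₙ`.
-/

namespace CechCover

variable {C : Type} [SmallCategory C] {A : Type}

theorem Subcat.IsIdeal.mem_of_hom {Dv : Subcat C} (h : Dv.IsIdeal) {x y : C} (f : x ⟶ y)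
    (hy : y ∈ Dv.objs) : x ∈ Dv.objs :=
  h.2 y x hy ⟨f⟩

theorem Subcat.IsIdeal.hom_mem {Dv : Subcat C} (h : Dv.IsIdeal) {x y : C} (f : x ⟶ y)
    (hx : x ∈ Dv.objs) (hy : y ∈ Dv.objs) : f ∈ Dv.homs x y := by
  rw [h.1 x y hx hy]
  trivial

variable {D : A → Subcat C}

theorem GrCechHom.ext_of_injective {X Y : GrCechObj D} (hX : Function.Injective X.idx)
    {F G : GrCechHom D X Y} (h : F.f = G.f) : F = G :=
  GrCechHom.ext' (OrderHom.ext _ _ <| funext fun j =>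
    hX ((F.idx_eq j).symm.trans (G.idx_eq j))) h

noncomputable def indexFinset (hlf : IsLocallyFinite D) (x : C) : Finset A :=
  (hlf x).toFinset

theorem coe_indexFinset (hlf : IsLocallyFinite D) (x : C) :
    (indexFinset hlf x : Set A) = {a | x ∈ (D a).objs} :=
  (hlf x).coe_toFinset

theorem indexFinset_nonempty (hcover : IsCover D) (hlf : IsLocallyFinite D) (x : C) :
    (indexFinset hlf x).Nonempty :=
  let ⟨a, ha⟩ := hcover.1 x
  ⟨a, (hlf x).mem_toFinset.2 ha⟩

section LinearOrder

variable [LinearOrder A]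

theorem GrCechRed.strictMono_idx (X : GrCechRed D (· < ·)) : StrictMono X.obj.idx :=
  fun i j h => X.property i j h

theorem GrCechRed.hom_ext {X Y : GrCechRed D (· < ·)} {F G : X ⟶ Y}
    (h : F.hom.f = G.hom.f) : F = G :=
  InducedCategory.hom_ext (GrCechHom.ext_of_injective X.strictMono_idx.injective h)

noncomputable def GrCechRed.homOfRangeSubset {X Y : GrCechRed D (· < ·)}
    (hrange : Set.range Y.obj.idx ⊆ Set.range X.obj.idx) (f : X.obj.pt ⟶ Y.obj.pt)
    (hf : ∀ j, f ∈ (D (Y.obj.idx j)).homs X.obj.pt Y.obj.pt) : X ⟶ Y :=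
  let e := X.strictMono_idx.orderIso X.obj.idx
  ⟨{ φ :=
       { toFun := fun j => e.symm ⟨Y.obj.idx j, hrange ⟨j, rfl⟩⟩
         monotone' := fun _ _ h =>
           e.symm.monotone (Subtype.mk_le_mk.2 (Y.strictMono_idx.monotone h)) }
     idx_eq := fun j => (congrArg Subtype.val (e.apply_symm_apply ⟨_, hrange ⟨j, rfl⟩⟩)).symm
     f := f
     mem := hf }⟩

/-- The object `π x` of the paper. -/
noncomputable def coverObj (hcover : IsCover D) (hlf : IsLocallyFinite D) (x : C) :
    GrCechRed D (· < ·) :=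
  let s := indexFinset hlf x
  ⟨{ n := s.card - 1
     idx := s.orderEmbOfFin (Nat.sub_add_cancel (indexFinset_nonempty hcover hlf x).card_pos).symm
     pt := x
     mem := fun i => (hlf x).mem_toFinset.1 (s.orderEmbOfFin_mem _ i) },
   fun _ _ h => (s.orderEmbOfFin _).strictMono h⟩

theorem range_coverObj_idx (hcover : IsCover D) (hlf : IsLocallyFinite D) (x : C) :
    Set.range (coverObj hcover hlf x).obj.idx = {a | x ∈ (D a).objs} :=
  (Finset.range_orderEmbOfFin _ _).trans (coe_indexFinset hlf x)

noncomputable def coverObjHomEquiv (hcover : IsCover D) (hlf : IsLocallyFinite D)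
    (hideal : ∀ a, (D a).IsIdeal) (x : C) (Y : GrCechRed D (· < ·)) :
    (coverObj hcover hlf x ⟶ Y) ≃ (x ⟶ Y.obj.pt) where
  toFun F := F.hom.f
  invFun f := GrCechRed.homOfRangeSubset
    (by
      rintro _ ⟨j, rfl⟩
      rw [range_coverObj_idx]
      exact (hideal _).mem_of_hom f (Y.obj.mem j))
    f (fun j => (hideal _).hom_mem f ((hideal _).mem_of_hom f (Y.obj.mem j)) (Y.obj.mem j))
  left_inv _ := GrCechRed.hom_ext rfl
  right_inv _ := rfl

end LinearOrder

end CechCover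

open CechCover

/-- For a locally finite ideal cover `D` of a small category `C` indexed by a totally
ordered set, the natural functor `ρ̃ : Gr(Č^o(D̃)) ⥤ C` has a left adjoint, namely the
functor `π` sending an object `x` to `x_{a_0…a_n}`, where `a_0 < … < a_n` are exactly
the indices `a` with `x ∈ ob(D_a)`. -/
theorem reduced_cech_nerve_left_adjoint_of_ideal_cover
    {C : Type} [SmallCategory C] {A : Type} [LinearOrder A] (D : A → Subcat C)
    (hcover : IsCover D) (hlf : IsLocallyFinite D) (hideal : ∀ a, (D a).IsIdeal) :
    ∃ π : C ⥤ GrCechRed D (· < ·),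
      Nonempty (π ⊣ redIncl D (· < ·) ⋙ grProj D) ∧
      ∀ x : C,
        (π.obj x).obj.pt = x ∧
        Set.range (π.obj x).obj.idx = {a : A | x ∈ (D a).objs} := by
  let ρ := redIncl D (· < ·) ⋙ grProj D
  let e : ∀ x Y, (coverObj hcover hlf x ⟶ Y) ≃ (x ⟶ ρ.obj Y) :=
    coverObjHomEquiv hcover hlf hideal
  have e_natural : ∀ x Y Y' (g : Y ⟶ Y') (F : coverObj hcover hlf x ⟶ Y),
      e x Y' (F ≫ g) = e x Y F ≫ ρ.map g :=
    fun _ _ _ _ _ => rfl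
  exact ⟨Adjunction.leftAdjointOfEquiv e e_natural,
    ⟨Adjunction.adjunctionOfEquivLeft e e_natural⟩,
    fun x => ⟨rfl, range_coverObj_idx hcover hlf x⟩⟩
end

section
/- Let C be a finite category and let A and B be subcategories of C with C = A ∪ B, such that both A and B are ideals of C, or both are filters of C. If each of A, B, A ∩ B, and A ∪ B has Euler characteristic, then χ(A ∪ B) = χ(A) + χ(B) − χ(A ∩ B). -/
/-! Euler characteristics are computed from weightings or coweightings, and a coweighting of
`C` restricts to a coweighting of every ideal (a weighting to every filter), because no
morphism enters an ideal from outside. So in the ideal case one coweighting `v` of `C`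
computes all four Euler characteristics as sums of `v` over the objects, and the formula is
inclusion–exclusion for finite sums; the filter case is dual. -/

open CategoryTheory

namespace CechCover

variable {C : Type} [SmallCategory C] {A : Type}

/-- The objects of a full subcategory on `S ⊆ ob C`, as a finset. -/
noncomputable def objFinset [Fintype C] (S : Set C) : Finset C := by
  classical exact Finset.univ.filter (· ∈ S)

/-- A weighting on the full subcategory of a finite category `C` on the set of objects
`S`: a vector `w` with `∑_b ζ(a, b) · w(b) = 1` for every object `a` of `S`, where
`ζ(a, b)` is the number of morphisms `a ⟶ b`. -/
def IsWeighting [Fintype C] [∀ x y : C, Fintype (x ⟶ y)] (S : Set C) (w : C → ℚ) : Prop :=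
  ∀ a ∈ S, ∑ b ∈ objFinset S, (Fintype.card (a ⟶ b) : ℚ) * w b = 1

/-- A coweighting, dually: `∑_a v(a) · ζ(a, b) = 1` for every object `b` of `S`. -/
def IsCoweighting [Fintype C] [∀ x y : C, Fintype (x ⟶ y)] (S : Set C) (v : C → ℚ) : Prop :=
  ∀ b ∈ S, ∑ a ∈ objFinset S, v a * (Fintype.card (a ⟶ b) : ℚ) = 1

/-- A finite (full sub)category has Euler characteristic if it admits both a weighting
and a coweighting. -/
def HasEulerChar [Fintype C] [∀ x y : C, Fintype (x ⟶ y)] (S : Set C) : Prop :=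
  (∃ w, IsWeighting S w) ∧ (∃ v, IsCoweighting S v)

/-- The Euler characteristic: the sum of the values of a weighting (this is independent
of the choice of weighting, and agrees with the sum of the values of any coweighting,
whenever the category has Euler characteristic). -/
noncomputable def eulerChar [Fintype C] [∀ x y : C, Fintype (x ⟶ y)] (S : Set C) : ℚ := by
  classical exact if h : ∃ w, IsWeighting S w then ∑ b ∈ objFinset S, h.choose b else 0

end CechCover

open CechCover

namespace CechCover

lemma IsCover.objs_union_eq_univ {C : Type} [SmallCategory C] {A B : Subcat C}
    (hcover : IsCover (fun b : Bool => bif b then A else B)) : A.objs ∪ B.objs = Set.univ := by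
  refine Set.eq_univ_of_forall fun x => ?_
  obtain ⟨_ | _, hx⟩ := hcover.1 x
  exacts [Or.inr hx, Or.inl hx]

section

variable {C : Type} [Fintype C]

lemma mem_objFinset {S : Set C} {x : C} : x ∈ objFinset S ↔ x ∈ S := by
  classical
  simp [objFinset]

lemma objFinset_mono {S T : Set C} (h : S ⊆ T) : objFinset S ⊆ objFinset T :=
  fun _ hx => mem_objFinset.mpr (h (mem_objFinset.mp hx))

lemma sum_objFinset_union_add_sum_objFinset_inter (S T : Set C) (f : C → ℚ) :
    ∑ x ∈ objFinset (S ∪ T), f x + ∑ x ∈ objFinset (S ∩ T), f x =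
      ∑ x ∈ objFinset S, f x + ∑ x ∈ objFinset T, f x := by
  classical
  have hunion : objFinset (S ∪ T) = objFinset S ∪ objFinset T := by
    ext; simp only [Finset.mem_union, mem_objFinset, Set.mem_union]
  have hinter : objFinset (S ∩ T) = objFinset S ∩ objFinset T := by
    ext; simp only [Finset.mem_inter, mem_objFinset, Set.mem_inter_iff]
  rw [hunion, hinter, Finset.sum_union_inter]

end

variable {C : Type} [SmallCategory C] [Fintype C] [∀ x y : C, Fintype (x ⟶ y)]

lemma sum_weighting_eq_sum_coweighting {S : Set C} {w v : C → ℚ}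
    (hw : IsWeighting S w) (hv : IsCoweighting S v) :
    ∑ b ∈ objFinset S, w b = ∑ a ∈ objFinset S, v a :=
  calc ∑ b ∈ objFinset S, w b
      = ∑ b ∈ objFinset S, (∑ a ∈ objFinset S, v a * (Fintype.card (a ⟶ b) : ℚ)) * w b := by
        refine Finset.sum_congr rfl fun b hb => ?_
        rw [hv b (mem_objFinset.mp hb), one_mul]
    _ = ∑ a ∈ objFinset S, v a * ∑ b ∈ objFinset S, (Fintype.card (a ⟶ b) : ℚ) * w b := by
        simp only [Finset.sum_mul, Finset.mul_sum, mul_assoc]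
        rw [Finset.sum_comm]
    _ = ∑ a ∈ objFinset S, v a := by
        refine Finset.sum_congr rfl fun a ha => ?_
        rw [hw a (mem_objFinset.mp ha), mul_one]

lemma eulerChar_eq_sum_of_isCoweighting {S : Set C} {v : C → ℚ}
    (hS : HasEulerChar S) (hv : IsCoweighting S v) :
    eulerChar S = ∑ a ∈ objFinset S, v a := by
  rw [eulerChar, dif_pos hS.1]
  exact sum_weighting_eq_sum_coweighting hS.1.choose_spec hv

lemma eulerChar_eq_sum_of_isWeighting {S : Set C} {w : C → ℚ}
    (hS : HasEulerChar S) (hw : IsWeighting S w) :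
    eulerChar S = ∑ b ∈ objFinset S, w b := by
  obtain ⟨v, hv⟩ := hS.2
  rw [eulerChar_eq_sum_of_isCoweighting hS hv, sum_weighting_eq_sum_coweighting hw hv]

lemma IsCoweighting.restrict {S T : Set C} {v : C → ℚ} (hv : IsCoweighting T v)
    (hST : S ⊆ T) (hS : ∀ a ∈ T, ∀ b ∈ S, Nonempty (a ⟶ b) → a ∈ S) :
    IsCoweighting S v := by
  intro b hb
  rw [← hv b (hST hb)]
  refine Finset.sum_subset (objFinset_mono hST) fun a haT haS => ?_
  have : IsEmpty (a ⟶ b) := ⟨fun f =>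
    haS (mem_objFinset.mpr (hS a (mem_objFinset.mp haT) b hb ⟨f⟩))⟩
  rw [Fintype.card_eq_zero, Nat.cast_zero, mul_zero]

lemma IsWeighting.restrict {S T : Set C} {w : C → ℚ} (hw : IsWeighting T w)
    (hST : S ⊆ T) (hS : ∀ a ∈ S, ∀ b ∈ T, Nonempty (a ⟶ b) → b ∈ S) :
    IsWeighting S w := by
  intro a ha
  rw [← hw a (hST ha)]
  refine Finset.sum_subset (objFinset_mono hST) fun b hbT hbS => ?_
  have : IsEmpty (a ⟶ b) := ⟨fun f =>
    hbS (mem_objFinset.mpr (hS a ha b (mem_objFinset.mp hbT) ⟨f⟩))⟩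
  rw [Fintype.card_eq_zero, Nat.cast_zero, zero_mul]

end CechCover

/-- For two subcategories `A` and `B` of a finite category `C` with `C = A ∪ B`, both
ideals or both filters, if each of `A`, `B`, `A ∩ B` and `A ∪ B` has Euler
characteristic, then `χ(A ∪ B) = χ(A) + χ(B) − χ(A ∩ B)`. -/
theorem euler_char_union_two
    {C : Type} [SmallCategory C] [Fintype C] [∀ x y : C, Fintype (x ⟶ y)]
    (A B : Subcat C)
    (hcover : IsCover (fun b : Bool => bif b then A else B))
    (h : (A.IsIdeal ∧ B.IsIdeal) ∨ (A.IsFilter ∧ B.IsFilter))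
    (hA : HasEulerChar A.objs) (hB : HasEulerChar B.objs)
    (hAB : HasEulerChar (A.objs ∩ B.objs))
    (hU : HasEulerChar (Set.univ : Set C)) :
    eulerChar (Set.univ : Set C) =
      eulerChar A.objs + eulerChar B.objs - eulerChar (A.objs ∩ B.objs) := by
  rw [eq_sub_iff_add_eq]
  rcases h with ⟨hIA, hIB⟩ | ⟨hFA, hFB⟩
  · obtain ⟨v, hv⟩ := hU.2
    have hvA : IsCoweighting A.objs v :=
      hv.restrict (Set.subset_univ _) fun a _ b hb f => hIA.2 b a hb f
    have hvB : IsCoweighting B.objs v :=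
      hv.restrict (Set.subset_univ _) fun a _ b hb f => hIB.2 b a hb f
    have hvAB : IsCoweighting (A.objs ∩ B.objs) v := hv.restrict (Set.subset_univ _)
      fun a _ b hb f => ⟨hIA.2 b a hb.1 f, hIB.2 b a hb.2 f⟩
    rw [eulerChar_eq_sum_of_isCoweighting hU hv, eulerChar_eq_sum_of_isCoweighting hA hvA,
      eulerChar_eq_sum_of_isCoweighting hB hvB, eulerChar_eq_sum_of_isCoweighting hAB hvAB,
      ← hcover.objs_union_eq_univ, sum_objFinset_union_add_sum_objFinset_inter]
  · obtain ⟨w, hw⟩ := hU.1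
    have hwA : IsWeighting A.objs w :=
      hw.restrict (Set.subset_univ _) fun a ha b _ f => hFA.2 a b ha f
    have hwB : IsWeighting B.objs w :=
      hw.restrict (Set.subset_univ _) fun a ha b _ f => hFB.2 a b ha f
    have hwAB : IsWeighting (A.objs ∩ B.objs) w := hw.restrict (Set.subset_univ _)
      fun a ha b _ f => ⟨hFA.2 a b ha.1 f, hFB.2 a b ha.2 f⟩
    rw [eulerChar_eq_sum_of_isWeighting hU hw, eulerChar_eq_sum_of_isWeighting hA hwA,
      eulerChar_eq_sum_of_isWeighting hB hwB, eulerChar_eq_sum_of_isWeighting hAB hwAB,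
      ← hcover.objs_union_eq_univ, sum_objFinset_union_add_sum_objFinset_inter]
end
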